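/- Let z₀ ∈ B^n (n ≥ 1), set R(z₀) = |1−⟨z₀,e₁⟩|²/(1−‖z₀‖²), w₀ = C(z₀) with second block w₀'' ∈ ℂ^{n−1}, and define T̃(w₁,w'') = (w₁ − 2⟨w'',w₀''⟩ + ‖w₀''‖² − i·Im((w₀)₁), w'' − w₀''). Then: (i) the Cayley transform C is a bijection from B^n onto the Siegel domain ℍⁿ; (ii) T̃ maps ℍⁿ bijectively onto ℍⁿ; (iii) (C⁻¹ ∘ T̃ ∘ C)(z₀) = ((1 − R(z₀))/(1 + R(z₀)))·e₁. -/

import Mathlib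

/-! The Siegel height `ρ(w) = Re w₁ - ‖w''‖²` cuts out `ℍⁿ` as `{ρ > 0}`, and it pulls back under
the Cayley transform to `(1 - ‖z‖²) / |1 - z₁|²`; this gives (i), with the explicit inverse
`w ↦ ((w₁ - 1)/(w₁ + 1), 2w''/(w₁ + 1))`. The map `T̃` is a Heisenberg translation: it preserves `ρ`
and its inverse is the translation by `(-w₀'', -Im (w₀)₁)`, which gives (ii). Finally `T̃` sends `w₀`
to `(ρ(w₀), 0) = (1/R(z₀), 0)`, and `C(s e₁) = ((1 + s)/(1 - s), 0)` with `(1 + s)/(1 - s) = 1/R`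
for `s = (1 - R)/(1 + R)`. -/

open Metric Filter Set Topology

/-- The point `e₁ = (1,0,…,0)` of `ℂ^(n+1)`. -/
noncomputable def e1 (n : ℕ) : EuclideanSpace ℂ (Fin (n+1)) := EuclideanSpace.single 0 1

/-- The Siegel domain `ℍ^N = {(w₁,w'') : Re w₁ > ‖w''‖²}` (here `N = n+1`). -/
def Siegel (n : ℕ) : Set (ℂ × EuclideanSpace ℂ (Fin n)) :=
  {w | ‖w.2‖^2 < w.1.re}

/-- The Cayley transform `C(z₁,z'') = ((1+z₁)/(1−z₁), z''/(1−z₁))`. -/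
noncomputable def cayley {n : ℕ} (z : EuclideanSpace ℂ (Fin (n+1))) :
    ℂ × EuclideanSpace ℂ (Fin n) :=
  ((1 + z 0) / (1 - z 0), WithLp.toLp 2 (fun j : Fin n => z j.succ / (1 - z 0)))


section ParabolicShift

variable {E : Type*} [NormedAddCommGroup E] [InnerProductSpace ℂ E]

def siegelHeight (w : ℂ × E) : ℝ := w.1.re - ‖w.2‖ ^ 2

/-- `inner ℂ b x` is conjugate-linear in `b`, so this is the paper's `⟨w'', b⟩`. -/
noncomputable def parabolicShift (b : E) (t : ℝ) (w : ℂ × E) : ℂ × E :=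
  (w.1 - 2 * (inner ℂ b w.2 : ℂ) + (‖b‖^2 : ℂ) - Complex.I * ((t : ℝ) : ℂ), w.2 - b)

lemma siegelHeight_parabolicShift (b : E) (t : ℝ) (w : ℂ × E) :
    siegelHeight (parabolicShift b t w) = siegelHeight w := by
  have hre : (inner ℂ w.2 b).re = (inner ℂ b w.2).re := by
    rw [← inner_conj_symm, Complex.conj_re]
  simp only [siegelHeight, parabolicShift, @norm_sub_sq ℂ, RCLike.re_to_complex, hre,
    Complex.sub_re, Complex.add_re, Complex.mul_re, Complex.I_re, Complex.I_im,
    ← Complex.ofReal_pow, Complex.ofReal_re, Complex.ofReal_im, Complex.re_ofNat,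
    Complex.im_ofNat]
  ring

lemma parabolicShift_neg_parabolicShift (b : E) (t : ℝ) (w : ℂ × E) :
    parabolicShift (-b) (-t) (parabolicShift b t w) = w := by
  have hbb : (inner ℂ b b : ℂ) = (‖b‖ : ℂ) ^ 2 := inner_self_eq_norm_sq_to_K b
  refine Prod.ext ?_ (by simp [parabolicShift])
  simp only [parabolicShift, inner_neg_left, inner_sub_right, hbb, norm_neg]
  push_cast
  ring

lemma bijOn_parabolicShift (b : E) (t : ℝ) :
    BijOn (parabolicShift b t) {w | 0 < siegelHeight w} {w | 0 < siegelHeight w} := by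
  have hinv : ∀ w, parabolicShift b t (parabolicShift (-b) (-t) w) = w := fun w => by
    simpa using parabolicShift_neg_parabolicShift (-b) (-t) w
  refine InvOn.bijOn ⟨fun w _ => parabolicShift_neg_parabolicShift b t w, fun w _ => hinv w⟩
    ?_ ?_ <;>
  · intro w hw
    simpa only [mem_ofPred_eq, siegelHeight_parabolicShift] using hw

lemma parabolicShift_self (w : ℂ × E) :
    parabolicShift w.2 w.1.im w = ((siegelHeight w : ℂ), 0) := by
  have hbb : (inner ℂ w.2 w.2 : ℂ) = (‖w.2‖ : ℂ) ^ 2 := inner_self_eq_norm_sq_to_K _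
  refine Prod.ext ?_ (sub_self _)
  simp only [parabolicShift, siegelHeight, hbb]
  push_cast
  linear_combination -Complex.re_add_im w.1

end ParabolicShift

lemma siegel_eq_setOf_siegelHeight_pos (n : ℕ) : Siegel n = {w | 0 < siegelHeight w} := by
  ext w
  simp [Siegel, siegelHeight]

lemma sq_norm_lt_one_iff_mem_ball {E : Type*} [SeminormedAddCommGroup E] (x : E) :
    ‖x‖ ^ 2 < 1 ↔ x ∈ ball 0 1 := by
  rw [mem_ball_zero_iff, sq_lt_one_iff_abs_lt_one, abs_norm]

section Cayley

variable {n : ℕ}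

noncomputable def cayleyInv (w : ℂ × EuclideanSpace ℂ (Fin n)) : EuclideanSpace ℂ (Fin (n+1)) :=
  WithLp.toLp 2 (Fin.cons ((w.1 - 1) / (w.1 + 1)) fun j => 2 * w.2 j / (w.1 + 1))

lemma Complex.re_one_add_div_one_sub (a : ℂ) :
    ((1 + a) / (1 - a)).re = (1 - ‖a‖ ^ 2) / ‖1 - a‖ ^ 2 := by
  simp only [Complex.div_re, Complex.add_re, Complex.sub_re, Complex.add_im, Complex.sub_im,
    Complex.one_re, Complex.one_im, Complex.normSq_apply, Complex.sq_norm]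
  ring

lemma norm_sq_cayley_snd (z : EuclideanSpace ℂ (Fin (n+1))) :
    ‖(cayley z).2‖ ^ 2 = (∑ j : Fin n, ‖z j.succ‖ ^ 2) / ‖1 - z 0‖ ^ 2 := by
  simp [cayley, EuclideanSpace.norm_sq_eq, Finset.sum_div, div_pow]

lemma siegelHeight_cayley (z : EuclideanSpace ℂ (Fin (n+1))) :
    siegelHeight (cayley z) = (1 - ‖z‖ ^ 2) / ‖1 - z 0‖ ^ 2 := by
  rw [siegelHeight, norm_sq_cayley_snd, EuclideanSpace.norm_sq_eq, Fin.sum_univ_succ, show (cayley z).1 = (1 + z 0) / (1 - z 0) from rfl, Complex.re_one_add_div_one_sub]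
  ring

lemma cayleyInv_cayley (z : EuclideanSpace ℂ (Fin (n+1))) (hz : z 0 ≠ 1) :
    cayleyInv (cayley z) = z := by
  have hz' : 1 - z 0 ≠ 0 := sub_ne_zero.mpr hz.symm
  have hden : (1 + z 0) / (1 - z 0) + 1 = 2 / (1 - z 0) := by field_simp; ring
  refine PiLp.ext (Fin.cases ?_ fun j => ?_)
  · simp only [cayleyInv, cayley, PiLp.toLp_apply, Fin.cons_zero, hden]
    field_simp
    ring
  · simp only [cayleyInv, cayley, PiLp.toLp_apply, Fin.cons_succ, hden]
    field_simp

lemma cayley_cayleyInv (w : ℂ × EuclideanSpace ℂ (Fin n)) (hw : w.1 ≠ -1) :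
    cayley (cayleyInv w) = w := by
  have hw' : w.1 + 1 ≠ 0 := by rwa [← sub_neg_eq_add, sub_ne_zero]
  have hden : 1 - (w.1 - 1) / (w.1 + 1) = 2 / (w.1 + 1) := by field_simp; ring
  refine Prod.ext ?_ (PiLp.ext fun j => ?_)
  · simp only [cayleyInv, cayley, PiLp.toLp_apply, Fin.cons_zero, hden]
    field_simp
    ring
  · simp only [cayleyInv, cayley, PiLp.toLp_apply, Fin.cons_zero, Fin.cons_succ, hden]
    field_simp

lemma cayleyInv_apply_zero_ne_one (w : ℂ × EuclideanSpace ℂ (Fin n)) : cayleyInv w 0 ≠ 1 := by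
  by_cases hw : w.1 + 1 = 0
  · simp [cayleyInv, hw]
  · simp only [cayleyInv, PiLp.toLp_apply, Fin.cons_zero, ne_eq, div_eq_one_iff_eq hw]
    intro h
    exact two_ne_zero (by linear_combination -h : (2 : ℂ) = 0)

lemma apply_zero_ne_one_of_mem_ball {z : EuclideanSpace ℂ (Fin (n+1))} (hz : z ∈ ball 0 1) :
    z 0 ≠ 1 := by
  intro h
  have := (PiLp.norm_apply_le z 0).trans_lt (mem_ball_zero_iff.mp hz)
  simp [h] at this

lemma fst_ne_neg_one_of_mem_siegel {w : ℂ × EuclideanSpace ℂ (Fin n)} (hw : w ∈ Siegel n) :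
    w.1 ≠ -1 := by
  intro h
  have : ‖w.2‖ ^ 2 < -1 := by simpa [Siegel, h] using hw
  nlinarith [sq_nonneg ‖w.2‖]

lemma cayley_mem_siegel_iff {z : EuclideanSpace ℂ (Fin (n+1))} (hz : z 0 ≠ 1) :
    cayley z ∈ Siegel n ↔ z ∈ ball 0 1 := by
  have hpos : 0 < ‖1 - z 0‖ ^ 2 := by
    have : 1 - z 0 ≠ 0 := sub_ne_zero.mpr hz.symm
    positivity
  rw [siegel_eq_setOf_siegelHeight_pos, mem_ofPred_eq, siegelHeight_cayley,
    div_pos_iff_of_pos_right hpos, sub_pos, sq_norm_lt_one_iff_mem_ball]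

lemma bijOn_cayley : BijOn (cayley (n := n)) (ball 0 1) (Siegel n) := by
  refine InvOn.bijOn (f' := cayleyInv)
    ⟨fun z hz => cayleyInv_cayley z (apply_zero_ne_one_of_mem_ball hz),
      fun w hw => cayley_cayleyInv w (fst_ne_neg_one_of_mem_siegel hw)⟩
    (fun z hz => (cayley_mem_siegel_iff (apply_zero_ne_one_of_mem_ball hz)).mpr hz)
    fun w hw => ?_
  rw [← cayley_mem_siegel_iff (cayleyInv_apply_zero_ne_one w),
    cayley_cayleyInv w (fst_ne_neg_one_of_mem_siegel hw)]
  exact hw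

lemma cayley_smul_e1 (c : ℂ) : cayley (c • e1 n) = ((1 + c) / (1 - c), 0) := by
  refine Prod.ext ?_ (PiLp.ext fun j => ?_) <;>
  simp [cayley, e1, Fin.succ_ne_zero]

end Cayley

/-- **Claim (normalizing parabolic automorphism of the Siegel domain).**
Let `z₀ ∈ B^N`, `R(z₀) = |1−⟨z₀,e₁⟩|²/(1−‖z₀‖²)`, `w₀ = C(z₀)` and
`T̃(w₁,w'') = (w₁ − 2⟨w'',w₀''⟩ + ‖w₀''‖² − i·Im((w₀)₁), w'' − w₀'')`. Then the Cayley
transform maps `B^N` bijectively onto `ℍ^N`, `T̃` maps `ℍ^N` bijectively onto itself, and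
`(C⁻¹ ∘ T̃ ∘ C)(z₀) = ((1−R(z₀))/(1+R(z₀)))·e₁`. -/
theorem parabolic_normalization {n : ℕ} (z₀ : EuclideanSpace ℂ (Fin (n+1)))
    (hz₀ : z₀ ∈ Metric.ball (0 : EuclideanSpace ℂ (Fin (n+1))) 1)
    (R : ℝ) (hR : R = ‖1 - z₀ 0‖ ^ 2 / (1 - ‖z₀‖^2))
    (T : ℂ × EuclideanSpace ℂ (Fin n) → ℂ × EuclideanSpace ℂ (Fin n))
    (hT : ∀ w : ℂ × EuclideanSpace ℂ (Fin n),
      T w = (w.1 - 2 * (inner ℂ (cayley z₀).2 w.2 : ℂ) + (‖(cayley z₀).2‖^2 : ℂ)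
          - Complex.I * (((cayley z₀).1.im : ℝ) : ℂ), w.2 - (cayley z₀).2)) :
    Set.BijOn (cayley (n := n)) (Metric.ball 0 1) (Siegel n) ∧
    Set.BijOn T (Siegel n) (Siegel n) ∧
    T (cayley z₀) = cayley ((((1 - R) / (1 + R) : ℝ) : ℂ) • e1 n) := by
  obtain rfl : T = parabolicShift (cayley z₀).2 (cayley z₀).1.im := funext hT
  refine ⟨bijOn_cayley, siegel_eq_setOf_siegelHeight_pos n ▸ bijOn_parabolicShift _ _, ?_⟩
  have hR_pos : 0 < R := by
    have hden : 0 < 1 - ‖z₀‖ ^ 2 := sub_pos.mpr ((sq_norm_lt_one_iff_mem_ball z₀).mpr hz₀)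
    have hnum : 1 - z₀ 0 ≠ 0 := sub_ne_zero.mpr (apply_zero_ne_one_of_mem_ball hz₀).symm
    rw [hR]
    positivity
  have hheight : siegelHeight (cayley z₀) = R⁻¹ := by
    rw [siegelHeight_cayley, hR, inv_div]
  have hmobius : (1 + (1 - R) / (1 + R)) / (1 - (1 - R) / (1 + R)) = R⁻¹ := by
    have h1R : 1 + R ≠ 0 := by positivity
    field_simp [hR_pos.ne']
    ring
  rw [parabolicShift_self, cayley_smul_e1, hheight, ← hmobius]
  norm_cast
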